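/- Let G be a weighted undirected graph with a finite set S of sites carrying additive weights, with all additively weighted site-to-vertex distances pairwise distinct. Then for every site s, the Voronoi cell Vor(s) induces a connected subgraph of G (assuming s ∈ Vor(s)). -/

import Mathlib

/-! A shortest walk from `s` to a vertex `v` of `Vor(s)` stays inside `Vor(s)`: if `u` lies on it,
then `d(s,u) + d(u,v) = d(s,v)`, so for every other site `t`,
`ω s + d(s,u) = ω s + d(s,v) - d(u,v) < ω t + d(t,v) - d(u,v) ≤ ω t + d(t,u)`.
Hence every vertex of the cell is joined to `s` inside the cell. -/

/-- The total weight of a walk in a weighted graph: the sum of the weights of its edges. -/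
def walkWeight {V : Type} {G : SimpleGraph V} (w : Sym2 V → ℝ) {a b : V} (p : G.Walk a b) : ℝ :=
  (p.edges.map w).sum

/-- The additively weighted Voronoi cell of a site `s` among the sites `S`. -/
def Vor {V : Type} (dist : V → V → ℝ) (S : Finset V) (ω : V → ℝ) (s : V) : Set V :=
  {v | ∀ t ∈ S, t ≠ s → ω s + dist s v < ω t + dist t v}

open SimpleGraph

lemma walkWeight_append {V : Type} {G : SimpleGraph V} (w : Sym2 V → ℝ) {a b c : V}
    (p : G.Walk a b) (q : G.Walk b c) :
    walkWeight w (p.append q) = walkWeight w p + walkWeight w q := by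
  simp [walkWeight, Walk.edges_append]

lemma SimpleGraph.induce_connected_of_forall_walk_support_subset {V : Type} {G : SimpleGraph V}
    {s : Set V} {c : V} (hc : c ∈ s)
    (h : ∀ v ∈ s, ∃ p : G.Walk c v, ∀ u ∈ p.support, u ∈ s) : (G.induce s).Connected :=
  G.induce_connected_of_patches c hc fun hv =>
    let ⟨p, hp⟩ := h _ hv
    ⟨_, hp, p.start_mem_support, p.end_mem_support, p.connected_induce_support.preconnected _ _⟩

section ShortestWalks

variable {V : Type} {G : SimpleGraph V} {w : Sym2 V → ℝ} {dist : V → V → ℝ}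
  (hdist : ∀ a b : V, IsLeast {x : ℝ | ∃ p : G.Walk a b, walkWeight w p = x} (dist a b))
include hdist

lemma dist_triangle_of_isLeast_walkWeight (a b c : V) : dist a c ≤ dist a b + dist b c := by
  obtain ⟨p, hp⟩ := (hdist a b).1
  obtain ⟨q, hq⟩ := (hdist b c).1
  calc dist a c ≤ walkWeight w (p.append q) := (hdist a c).2 ⟨_, rfl⟩
    _ = dist a b + dist b c := by rw [walkWeight_append, hp, hq]

lemma exists_walk_forall_mem_support_dist_add_dist_le (a b : V) :
    ∃ p : G.Walk a b, ∀ u ∈ p.support, dist a u + dist u b ≤ dist a b := by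
  classical
  obtain ⟨p, hp⟩ := (hdist a b).1
  refine ⟨p, fun u hu => ?_⟩
  have hsplit := congrArg (walkWeight w) (p.take_spec hu)
  rw [walkWeight_append, hp] at hsplit
  have hfirst : dist a u ≤ walkWeight w (p.takeUntil u hu) := (hdist a u).2 ⟨_, rfl⟩
  have hsecond : dist u b ≤ walkWeight w (p.dropUntil u hu) := (hdist u b).2 ⟨_, rfl⟩
  linarith

end ShortestWalks

lemma mem_Vor_of_dist_add_dist_le {V : Type} {dist : V → V → ℝ} {S : Finset V} {ω : V → ℝ}
    {s u v : V} (htri : ∀ a b c : V, dist a c ≤ dist a b + dist b c)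
    (hv : v ∈ Vor dist S ω s) (hu : dist s u + dist u v ≤ dist s v) : u ∈ Vor dist S ω s := by
  intro t ht hts
  have hcloser := hv t ht hts
  have htv := htri t u v
  linarith

theorem stmt8_general {V : Type} (G : SimpleGraph V) (w : Sym2 V → ℝ)
    (dist : V → V → ℝ)
    (hdist : ∀ a b : V, IsLeast {x : ℝ | ∃ p : G.Walk a b, walkWeight w p = x} (dist a b))
    (S : Finset V) (ω : V → ℝ)
    (s : V) (hself : s ∈ Vor dist S ω s) :
    (G.induce (Vor dist S ω s)).Connected := by
  refine induce_connected_of_forall_walk_support_subset hself fun v hv => ?_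
  obtain ⟨p, hp⟩ := exists_walk_forall_mem_support_dist_add_dist_le hdist s v
  exact ⟨p, fun u hu =>
    mem_Vor_of_dist_add_dist_le (dist_triangle_of_isLeast_walkWeight hdist) hv (hp u hu)⟩

/-- With pairwise distinct additively weighted distances and positive edge weights, each
Voronoi cell containing its own site induces a connected subgraph of `G`. -/
theorem stmt8 {V : Type} (G : SimpleGraph V) (w : Sym2 V → ℝ)
    (hw : ∀ e, 0 < w e)
    (dist : V → V → ℝ)
    (hdist : ∀ a b : V, IsLeast {x : ℝ | ∃ p : G.Walk a b, walkWeight w p = x} (dist a b))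
    (S : Finset V) (ω : V → ℝ) (hω : ∀ s ∈ S, 0 ≤ ω s)
    (hties : ∀ v : V, ∀ s ∈ S, ∀ t ∈ S, s ≠ t → ω s + dist s v ≠ ω t + dist t v)
    (s : V) (hs : s ∈ S) (hself : s ∈ Vor dist S ω s) :
    (G.induce (Vor dist S ω s)).Connected :=
  stmt8_general G w dist hdist S ω s hself
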